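/- arXiv:1810.11781 — 3 statements merged into one kernel-verified Lean document; each statement's English description precedes it below -/
import Mathlib

section
/- Csiszár sum identity: for any discrete random vectors Y_1^n, Y_2^n and any random variable T, Σ_{i=1}^n I(Y_{2,i+1}^n ; Y_{1,i} | Y_1^{i-1}, T) = Σ_{i=1}^n I(Y_1^{i-1} ; Y_{2,i} | Y_{2,i+1}^n, T), where Y_1^0 and Y_{2,n+1}^n denote empty (constant) random variables. -/
open scoped BigOperators
open Real

namespace Masking

/-- A probability mass function on a finite sample space. -/
structure FinProb (Ω : Type) [Fintype Ω ] where
  p : Ω → ℝ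
  nonneg : ∀ ω, 0 ≤ p ω
  sum_eq_one : ∑ ω, p ω = 1

variable {Ω : Type} [Fintype Ω]

/-- Distribution (pmf) of a random variable `X`. -/
def pdist (μ : FinProb Ω) {α : Type} [DecidableEq α] (X : Ω → α) (a : α) : ℝ :=
  ∑ ω, if X ω = a then μ.p ω else 0

/-- Shannon entropy (in nats). -/
noncomputable def ent (μ : FinProb Ω) {α : Type} [Fintype α] [DecidableEq α] (X : Ω → α) : ℝ :=
  -∑ a, pdist μ X a * Real.log (pdist μ X a)

/-- Conditional entropy `H(X|Y)`. -/
noncomputable def condEnt (μ : FinProb Ω) {α β : Type} [Fintype α] [DecidableEq α] [Fintype β]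
    [DecidableEq β] (X : Ω → α) (Y : Ω → β) : ℝ :=
  ent μ (fun ω => (X ω, Y ω)) - ent μ Y

/-- Mutual information `I(X;Y)`. -/
noncomputable def mutInf (μ : FinProb Ω) {α β : Type} [Fintype α] [DecidableEq α] [Fintype β]
    [DecidableEq β] (X : Ω → α) (Y : Ω → β) : ℝ :=
  ent μ X + ent μ Y - ent μ (fun ω => (X ω, Y ω))

/-- Conditional mutual information `I(X;Y|Z)`. -/
noncomputable def condMutInf (μ : FinProb Ω) {α β γ : Type} [Fintype α] [DecidableEq α] [Fintype β]
    [DecidableEq β] [Fintype γ] [DecidableEq γ]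
    (X : Ω → α) (Y : Ω → β) (Z : Ω → γ) : ℝ :=
  condEnt μ X Z + condEnt μ Y Z - condEnt μ (fun ω => (X ω, Y ω)) Z

/-- Independence of two random variables. -/
def IndepRV (μ : FinProb Ω) {α β : Type} [DecidableEq α] [DecidableEq β]
    (X : Ω → α) (Y : Ω → β) : Prop :=
  ∀ a b, pdist μ (fun ω => (X ω, Y ω)) (a, b) = pdist μ X a * pdist μ Y b

/-- Mutual independence of a finite family of random variables. -/
def iIndepFam (μ : FinProb Ω) {n : ℕ} {α : Type} [DecidableEq α]
    (X : Fin n → Ω → α) : Prop :=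
  ∀ f : Fin n → α, pdist μ (fun ω => fun i => X i ω) f = ∏ i, pdist μ (X i) (f i)

end Masking

namespace CsiszarAux
open Masking

variable {Ω : Type} [Fintype Ω]

lemma ent_eq_of_comp (μ : FinProb Ω) {α β : Type} [Fintype α] [DecidableEq α] [Fintype β]
    [DecidableEq β] (X : Ω → α) (X' : Ω → β) (e : α → β) (he : Function.Injective e)
    (h : ∀ ω, X' ω = e (X ω)) : ent μ X' = ent μ X := by
  have hX' : X' = fun ω => e (X ω) := funext h
  subst hX'
  unfold ent
  congr 1
  have hz : ∀ b ∈ Finset.univ, b ∉ Finset.univ.image e →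
      pdist μ (fun ω => e (X ω)) b * Real.log (pdist μ (fun ω => e (X ω)) b) = 0 := by
    intro b _ hb
    have : pdist μ (fun ω => e (X ω)) b = 0 := by
      apply Finset.sum_eq_zero
      intro ω _
      rw [if_neg]
      intro hc
      exact hb (Finset.mem_image.2 ⟨X ω, Finset.mem_univ _, hc⟩)
    simp [this]
  rw [← Finset.sum_subset (Finset.subset_univ (Finset.univ.image e)) hz,
    Finset.sum_image (fun x _ y _ hxy => he hxy)]
  apply Finset.sum_congr rfl
  intro a _
  have : pdist μ (fun ω => e (X ω)) (e a) = pdist μ X a := by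
    apply Finset.sum_congr rfl
    intro ω _
    simp [he.eq_iff]
  rw [this]

lemma condMutInf_expand (μ : FinProb Ω) {α β γ : Type} [Fintype α] [DecidableEq α] [Fintype β]
    [DecidableEq β] [Fintype γ] [DecidableEq γ] (X : Ω → α) (Y : Ω → β) (Z : Ω → γ) :
    condMutInf μ X Y Z = ent μ (fun ω => (X ω, Z ω)) + ent μ (fun ω => (Y ω, Z ω))
      - ent μ (fun ω => ((X ω, Y ω), Z ω)) - ent μ Z := by
  unfold condMutInf condEnt; ring

variable {𝒴₁ 𝒴₂ 𝒯 : Type} [Fintype 𝒴₁] [DecidableEq 𝒴₁]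
    [Fintype 𝒴₂] [DecidableEq 𝒴₂] [Fintype 𝒯] [DecidableEq 𝒯] {n : ℕ}

def Pf (Y1 : Fin n → Ω → 𝒴₁) (d1 : 𝒴₁) (k : ℕ) (ω : Ω) : Fin n → 𝒴₁ :=
  fun j => if j.1 < k then Y1 j ω else d1
def Qf (Y2 : Fin n → Ω → 𝒴₂) (d2 : 𝒴₂) (k : ℕ) (ω : Ω) : Fin n → 𝒴₂ :=
  fun j => if k ≤ j.1 then Y2 j ω else d2

noncomputable def Af (μ : FinProb Ω) (Y1 : Fin n → Ω → 𝒴₁) (T : Ω → 𝒯) (d1 : 𝒴₁) (k : ℕ) : ℝ :=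
  ent μ (fun ω => (Pf Y1 d1 k ω, T ω))
noncomputable def Bf (μ : FinProb Ω) (Y2 : Fin n → Ω → 𝒴₂) (T : Ω → 𝒯) (d2 : 𝒴₂) (k : ℕ) : ℝ :=
  ent μ (fun ω => (Qf Y2 d2 k ω, T ω))
noncomputable def Gf (μ : FinProb Ω) (Y1 : Fin n → Ω → 𝒴₁) (Y2 : Fin n → Ω → 𝒴₂) (T : Ω → 𝒯)
    (d1 : 𝒴₁) (d2 : 𝒴₂) (k : ℕ) : ℝ :=
  ent μ (fun ω => (Pf Y1 d1 k ω, (Qf Y2 d2 k ω, T ω)))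
noncomputable def Df (μ : FinProb Ω) (Y1 : Fin n → Ω → 𝒴₁) (Y2 : Fin n → Ω → 𝒴₂) (T : Ω → 𝒯)
    (d1 : 𝒴₁) (d2 : 𝒴₂) (k : ℕ) : ℝ :=
  ent μ (fun ω => (Pf Y1 d1 k ω, (Qf Y2 d2 (k+1) ω, T ω)))

lemma lhs_term (μ : FinProb Ω) (Y1 : Fin n → Ω → 𝒴₁) (Y2 : Fin n → Ω → 𝒴₂) (T : Ω → 𝒯)
    (d1 : 𝒴₁) (d2 : 𝒴₂) (i : Fin n) :
    condMutInf μ (fun ω => fun j : {k : Fin n // i < k} => Y2 j.1 ω) (Y1 i)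
      (fun ω => ((fun j : Fin i.1 => Y1 (Fin.castLE i.isLt.le j) ω), T ω))
    = Df μ Y1 Y2 T d1 d2 i.1 + Af μ Y1 T d1 (i.1+1) - Gf μ Y1 Y2 T d1 d2 (i.1+1)
      - Af μ Y1 T d1 i.1 := by
  have h1 : Df μ Y1 Y2 T d1 d2 i.1
      = ent μ (fun ω => ((fun j : {k : Fin n // i < k} => Y2 j.1 ω),
        ((fun j : Fin i.1 => Y1 (Fin.castLE i.isLt.le j) ω), T ω))) := by
    refine ent_eq_of_comp μ _ _
      (fun x : ({k : Fin n // i < k} → 𝒴₂) × ((Fin i.1 → 𝒴₁) × 𝒯) =>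
        ((fun j : Fin n => if h : j.1 < i.1 then x.2.1 ⟨j.1, h⟩ else d1),
        ((fun j : Fin n => if h : i < j then x.1 ⟨j, h⟩ else d2), x.2.2))) ?_ ?_
    · apply Function.LeftInverse.injective
        (g := fun z : (Fin n → 𝒴₁) × ((Fin n → 𝒴₂) × 𝒯) =>
          ((fun j : {k : Fin n // i < k} => z.2.1 j.1),
          ((fun j : Fin i.1 => z.1 (Fin.castLE i.isLt.le j)), z.2.2)))
      intro x
      refine Prod.ext (funext fun j => ?_) (Prod.ext (funext fun j => ?_) rfl)
      · simp [j.2]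
      · simp [j.isLt]
    · intro ω
      refine Prod.ext (funext fun j => ?_) (Prod.ext (funext fun j => ?_) rfl)
      · by_cases h : j.1 < i.1 <;> simp [Pf, h, Fin.castLE]
      · by_cases h : i < j <;> simp [Qf, h, Fin.lt_def, Nat.succ_le_iff]
  have h2 : Af μ Y1 T d1 (i.1+1)
      = ent μ (fun ω => (Y1 i ω,
        ((fun j : Fin i.1 => Y1 (Fin.castLE i.isLt.le j) ω), T ω))) := by
    refine ent_eq_of_comp μ _ _
      (fun x : 𝒴₁ × ((Fin i.1 → 𝒴₁) × 𝒯) =>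
        ((fun j : Fin n => if h : j.1 < i.1 then x.2.1 ⟨j.1, h⟩
          else if j.1 = i.1 then x.1 else d1), x.2.2)) ?_ ?_
    · apply Function.LeftInverse.injective
        (g := fun z : (Fin n → 𝒴₁) × 𝒯 =>
          (z.1 i, ((fun j : Fin i.1 => z.1 (Fin.castLE i.isLt.le j)), z.2)))
      intro x
      refine Prod.ext ?_ (Prod.ext (funext fun j => ?_) rfl)
      · simp
      · simp [j.isLt]
    · intro ω
      refine Prod.ext (funext fun j => ?_) rfl
      rcases Nat.lt_trichotomy j.1 i.1 with h | h | h
      · simp [Pf, h, Nat.lt_succ_of_lt h, Fin.castLE]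
      · have hj : j = i := Fin.ext h
        subst hj
        simp [Pf]
      · simp only [Pf]
        rw [if_neg (by omega), dif_neg (by omega), if_neg (by omega)]
  have h3 : Gf μ Y1 Y2 T d1 d2 (i.1+1)
      = ent μ (fun ω => (((fun j : {k : Fin n // i < k} => Y2 j.1 ω), Y1 i ω),
        ((fun j : Fin i.1 => Y1 (Fin.castLE i.isLt.le j) ω), T ω))) := by
    refine ent_eq_of_comp μ _ _
      (fun x : (({k : Fin n // i < k} → 𝒴₂) × 𝒴₁) × ((Fin i.1 → 𝒴₁) × 𝒯) =>
        ((fun j : Fin n => if h : j.1 < i.1 then x.2.1 ⟨j.1, h⟩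
          else if j.1 = i.1 then x.1.2 else d1),
        ((fun j : Fin n => if h : i < j then x.1.1 ⟨j, h⟩ else d2), x.2.2))) ?_ ?_
    · apply Function.LeftInverse.injective
        (g := fun z : (Fin n → 𝒴₁) × ((Fin n → 𝒴₂) × 𝒯) =>
          (((fun j : {k : Fin n // i < k} => z.2.1 j.1), z.1 i),
          ((fun j : Fin i.1 => z.1 (Fin.castLE i.isLt.le j)), z.2.2)))
      intro x
      refine Prod.ext (Prod.ext (funext fun j => ?_) ?_) (Prod.ext (funext fun j => ?_) rfl)
      · simp [j.2]
      · simp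
      · simp [j.isLt]
    · intro ω
      refine Prod.ext (funext fun j => ?_) (Prod.ext (funext fun j => ?_) rfl)
      · rcases Nat.lt_trichotomy j.1 i.1 with h | h | h
        · simp [Pf, h, Nat.lt_succ_of_lt h, Fin.castLE]
        · have hj : j = i := Fin.ext h
          subst hj
          simp [Pf]
        · simp only [Pf]
          rw [if_neg (by omega), dif_neg (by omega), if_neg (by omega)]
      · by_cases h : i < j <;> simp [Qf, h, Fin.lt_def, Nat.succ_le_iff]
  have h4 : Af μ Y1 T d1 i.1
      = ent μ (fun ω => ((fun j : Fin i.1 => Y1 (Fin.castLE i.isLt.le j) ω), T ω)) := by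
    refine ent_eq_of_comp μ _ _
      (fun x : (Fin i.1 → 𝒴₁) × 𝒯 =>
        ((fun j : Fin n => if h : j.1 < i.1 then x.1 ⟨j.1, h⟩ else d1), x.2)) ?_ ?_
    · apply Function.LeftInverse.injective
        (g := fun z : (Fin n → 𝒴₁) × 𝒯 =>
          ((fun j : Fin i.1 => z.1 (Fin.castLE i.isLt.le j)), z.2))
      intro x
      refine Prod.ext (funext fun j => ?_) rfl
      simp [j.isLt]
    · intro ω
      refine Prod.ext (funext fun j => ?_) rfl
      by_cases h : j.1 < i.1 <;> simp [Pf, h, Fin.castLE]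
  rw [condMutInf_expand, h1, h2, h3, h4]

lemma rhs_term (μ : FinProb Ω) (Y1 : Fin n → Ω → 𝒴₁) (Y2 : Fin n → Ω → 𝒴₂) (T : Ω → 𝒯)
    (d1 : 𝒴₁) (d2 : 𝒴₂) (i : Fin n) :
    condMutInf μ (fun ω => fun j : Fin i.1 => Y1 (Fin.castLE i.isLt.le j) ω) (Y2 i)
      (fun ω => ((fun j : {k : Fin n // i < k} => Y2 j.1 ω), T ω))
    = Df μ Y1 Y2 T d1 d2 i.1 + Bf μ Y2 T d2 i.1 - Gf μ Y1 Y2 T d1 d2 i.1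
      - Bf μ Y2 T d2 (i.1+1) := by
  have h1 : Df μ Y1 Y2 T d1 d2 i.1
      = ent μ (fun ω => ((fun j : Fin i.1 => Y1 (Fin.castLE i.isLt.le j) ω),
        ((fun j : {k : Fin n // i < k} => Y2 j.1 ω), T ω))) := by
    refine ent_eq_of_comp μ _ _
      (fun x : (Fin i.1 → 𝒴₁) × (({k : Fin n // i < k} → 𝒴₂) × 𝒯) =>
        ((fun j : Fin n => if h : j.1 < i.1 then x.1 ⟨j.1, h⟩ else d1),
        ((fun j : Fin n => if h : i < j then x.2.1 ⟨j, h⟩ else d2), x.2.2))) ?_ ?_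
    · apply Function.LeftInverse.injective
        (g := fun z : (Fin n → 𝒴₁) × ((Fin n → 𝒴₂) × 𝒯) =>
          ((fun j : Fin i.1 => z.1 (Fin.castLE i.isLt.le j)),
          ((fun j : {k : Fin n // i < k} => z.2.1 j.1), z.2.2)))
      intro x
      refine Prod.ext (funext fun j => ?_) (Prod.ext (funext fun j => ?_) rfl)
      · simp [j.isLt]
      · simp [j.2]
    · intro ω
      refine Prod.ext (funext fun j => ?_) (Prod.ext (funext fun j => ?_) rfl)
      · by_cases h : j.1 < i.1 <;> simp [Pf, h, Fin.castLE]
      · by_cases h : i < j <;> simp [Qf, h, Fin.lt_def, Nat.succ_le_iff]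
  have h2 : Bf μ Y2 T d2 i.1
      = ent μ (fun ω => (Y2 i ω,
        ((fun j : {k : Fin n // i < k} => Y2 j.1 ω), T ω))) := by
    refine ent_eq_of_comp μ _ _
      (fun x : 𝒴₂ × (({k : Fin n // i < k} → 𝒴₂) × 𝒯) =>
        ((fun j : Fin n => if h : i < j then x.2.1 ⟨j, h⟩
          else if j = i then x.1 else d2), x.2.2)) ?_ ?_
    · apply Function.LeftInverse.injective
        (g := fun z : (Fin n → 𝒴₂) × 𝒯 =>
          (z.1 i, ((fun j : {k : Fin n // i < k} => z.1 j.1), z.2)))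
      intro x
      refine Prod.ext ?_ (Prod.ext (funext fun j => ?_) rfl)
      · simp
      · simp [j.2]
    · intro ω
      refine Prod.ext (funext fun j => ?_) rfl
      rcases Nat.lt_trichotomy j.1 i.1 with h | h | h
      · simp [Qf, (by omega : ¬ i.1 ≤ j.1), (show ¬ i < j by rw [Fin.lt_def]; omega),
          (show ¬ j = i by intro hc; subst hc; omega),
          (show ¬ i ≤ j by rw [Fin.le_def]; omega)]
      · have hj : j = i := Fin.ext h
        subst hj
        simp [Qf, lt_irrefl]
      · simp [Qf, (by omega : i.1 ≤ j.1), (show i < j by rw [Fin.lt_def]; omega)]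
  have h3 : Gf μ Y1 Y2 T d1 d2 i.1
      = ent μ (fun ω => (((fun j : Fin i.1 => Y1 (Fin.castLE i.isLt.le j) ω), Y2 i ω),
        ((fun j : {k : Fin n // i < k} => Y2 j.1 ω), T ω))) := by
    refine ent_eq_of_comp μ _ _
      (fun x : ((Fin i.1 → 𝒴₁) × 𝒴₂) × (({k : Fin n // i < k} → 𝒴₂) × 𝒯) =>
        ((fun j : Fin n => if h : j.1 < i.1 then x.1.1 ⟨j.1, h⟩ else d1),
        ((fun j : Fin n => if h : i < j then x.2.1 ⟨j, h⟩
          else if j = i then x.1.2 else d2), x.2.2))) ?_ ?_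
    · apply Function.LeftInverse.injective
        (g := fun z : (Fin n → 𝒴₁) × ((Fin n → 𝒴₂) × 𝒯) =>
          (((fun j : Fin i.1 => z.1 (Fin.castLE i.isLt.le j)), z.2.1 i),
          ((fun j : {k : Fin n // i < k} => z.2.1 j.1), z.2.2)))
      intro x
      refine Prod.ext (Prod.ext (funext fun j => ?_) ?_) (Prod.ext (funext fun j => ?_) rfl)
      · simp [j.isLt]
      · simp
      · simp [j.2]
    · intro ω
      refine Prod.ext (funext fun j => ?_) (Prod.ext (funext fun j => ?_) rfl)
      · by_cases h : j.1 < i.1 <;> simp [Pf, h, Fin.castLE]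
      · rcases Nat.lt_trichotomy j.1 i.1 with h | h | h
        · simp [Qf, (by omega : ¬ i.1 ≤ j.1), (show ¬ i < j by rw [Fin.lt_def]; omega),
            (show ¬ j = i by intro hc; subst hc; omega),
            (show ¬ i ≤ j by rw [Fin.le_def]; omega)]
        · have hj : j = i := Fin.ext h
          subst hj
          simp [Qf, lt_irrefl]
        · simp [Qf, (by omega : i.1 ≤ j.1), (show i < j by rw [Fin.lt_def]; omega)]
  have h4 : Bf μ Y2 T d2 (i.1+1)
      = ent μ (fun ω => ((fun j : {k : Fin n // i < k} => Y2 j.1 ω), T ω)) := by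
    refine ent_eq_of_comp μ _ _
      (fun x : ({k : Fin n // i < k} → 𝒴₂) × 𝒯 =>
        ((fun j : Fin n => if h : i < j then x.1 ⟨j, h⟩ else d2), x.2)) ?_ ?_
    · apply Function.LeftInverse.injective
        (g := fun z : (Fin n → 𝒴₂) × 𝒯 =>
          ((fun j : {k : Fin n // i < k} => z.1 j.1), z.2))
      intro x
      refine Prod.ext (funext fun j => ?_) rfl
      simp [j.2]
    · intro ω
      refine Prod.ext (funext fun j => ?_) rfl
      by_cases h : i < j <;> simp [Qf, h, Fin.lt_def, Nat.succ_le_iff]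
  rw [condMutInf_expand, h1, h2, h3, h4]

lemma Af_zero (μ : FinProb Ω) (Y1 : Fin n → Ω → 𝒴₁) (T : Ω → 𝒯) (d1 : 𝒴₁) :
    Af μ Y1 T d1 0 = ent μ T := by
  refine ent_eq_of_comp μ T _ (fun t : 𝒯 => ((fun _ : Fin n => d1), t))
    (fun a b hab => congrArg Prod.snd hab) ?_
  intro ω
  refine Prod.ext (funext fun j => ?_) rfl
  simp [Pf]

lemma Bf_top (μ : FinProb Ω) (Y2 : Fin n → Ω → 𝒴₂) (T : Ω → 𝒯) (d2 : 𝒴₂) :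
    Bf μ Y2 T d2 n = ent μ T := by
  refine ent_eq_of_comp μ T _ (fun t : 𝒯 => ((fun _ : Fin n => d2), t))
    (fun a b hab => congrArg Prod.snd hab) ?_
  intro ω
  refine Prod.ext (funext fun j => ?_) rfl
  simp [Qf, (show ¬ n ≤ j.1 by omega)]

lemma Gf_top (μ : FinProb Ω) (Y1 : Fin n → Ω → 𝒴₁) (Y2 : Fin n → Ω → 𝒴₂) (T : Ω → 𝒯)
    (d1 : 𝒴₁) (d2 : 𝒴₂) : Gf μ Y1 Y2 T d1 d2 n = Af μ Y1 T d1 n := by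
  unfold Gf Af
  refine ent_eq_of_comp μ (fun ω => (Pf Y1 d1 n ω, T ω))
    (fun ω => (Pf Y1 d1 n ω, (Qf Y2 d2 n ω, T ω)))
    (fun x : (Fin n → 𝒴₁) × 𝒯 => (x.1, ((fun _ : Fin n => d2), x.2))) ?_ ?_
  · apply Function.LeftInverse.injective
      (g := fun z : (Fin n → 𝒴₁) × ((Fin n → 𝒴₂) × 𝒯) => (z.1, z.2.2))
    intro x
    rfl
  · intro ω
    refine Prod.ext rfl (Prod.ext (funext fun j => ?_) rfl)
    simp [Qf, (show ¬ n ≤ j.1 by omega)]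

lemma Gf_zero (μ : FinProb Ω) (Y1 : Fin n → Ω → 𝒴₁) (Y2 : Fin n → Ω → 𝒴₂) (T : Ω → 𝒯)
    (d1 : 𝒴₁) (d2 : 𝒴₂) : Gf μ Y1 Y2 T d1 d2 0 = Bf μ Y2 T d2 0 := by
  unfold Gf Bf
  refine ent_eq_of_comp μ (fun ω => (Qf Y2 d2 0 ω, T ω))
    (fun ω => (Pf Y1 d1 0 ω, (Qf Y2 d2 0 ω, T ω)))
    (fun x : (Fin n → 𝒴₂) × 𝒯 => ((fun _ : Fin n => d1), (x.1, x.2))) ?_ ?_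
  · apply Function.LeftInverse.injective
      (g := fun z : (Fin n → 𝒴₁) × ((Fin n → 𝒴₂) × 𝒯) => (z.2.1, z.2.2))
    intro x
    rfl
  · intro ω
    refine Prod.ext (funext fun j => ?_) rfl
    simp [Pf]

end CsiszarAux

open CsiszarAux in
open Masking in
/-- Csiszár sum identity:
`∑ i, I(Y₂ⁿ_{i+1}; Y₁ᵢ | Y₁^{i-1}, T) = ∑ i, I(Y₁^{i-1}; Y₂ᵢ | Y₂ⁿ_{i+1}, T)`. -/
theorem csiszar_sum_identity
    {Ω 𝒴₁ 𝒴₂ 𝒯 : Type} [Fintype Ω] [Fintype 𝒴₁] [DecidableEq 𝒴₁]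
    [Fintype 𝒴₂] [DecidableEq 𝒴₂] [Fintype 𝒯] [DecidableEq 𝒯]
    (μ : FinProb Ω) {n : ℕ} (Y1 : Fin n → Ω → 𝒴₁) (Y2 : Fin n → Ω → 𝒴₂) (T : Ω → 𝒯) :
    ∑ i : Fin n,
        condMutInf μ (fun ω => fun j : {k : Fin n // i < k} => Y2 j.1 ω) (Y1 i)
          (fun ω => ((fun j : Fin i.1 => Y1 (Fin.castLE i.isLt.le j) ω), T ω))
      = ∑ i : Fin n,
        condMutInf μ (fun ω => fun j : Fin i.1 => Y1 (Fin.castLE i.isLt.le j) ω) (Y2 i)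
          (fun ω => ((fun j : {k : Fin n // i < k} => Y2 j.1 ω), T ω)) := by
  rcases Nat.eq_zero_or_pos n with hn | hn
  · subst hn
    simp
  · have hΩ : Nonempty Ω := by
      rcases isEmpty_or_nonempty Ω with hE | hN
      · exact absurd μ.sum_eq_one (by simp)
      · exact hN
    obtain ⟨ω₀⟩ := hΩ
    set d1 : 𝒴₁ := Y1 ⟨0, hn⟩ ω₀ with hd1
    set d2 : 𝒴₂ := Y2 ⟨0, hn⟩ ω₀ with hd2
    calc ∑ i : Fin n,
        condMutInf μ (fun ω => fun j : {k : Fin n // i < k} => Y2 j.1 ω) (Y1 i)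
          (fun ω => ((fun j : Fin i.1 => Y1 (Fin.castLE i.isLt.le j) ω), T ω))
        = ∑ i : Fin n, (fun k : ℕ => Df μ Y1 Y2 T d1 d2 k + Af μ Y1 T d1 (k+1)
            - Gf μ Y1 Y2 T d1 d2 (k+1) - Af μ Y1 T d1 k) i.1 :=
          Finset.sum_congr rfl (fun i _ => lhs_term μ Y1 Y2 T d1 d2 i)
      _ = ∑ k ∈ Finset.range n, (Df μ Y1 Y2 T d1 d2 k + Af μ Y1 T d1 (k+1)
            - Gf μ Y1 Y2 T d1 d2 (k+1) - Af μ Y1 T d1 k) := by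
          exact Fin.sum_univ_eq_sum_range (fun k : ℕ => Df μ Y1 Y2 T d1 d2 k
            + Af μ Y1 T d1 (k+1) - Gf μ Y1 Y2 T d1 d2 (k+1) - Af μ Y1 T d1 k) n
      _ = ∑ k ∈ Finset.range n, (Df μ Y1 Y2 T d1 d2 k - Gf μ Y1 Y2 T d1 d2 k)
            + ((Af μ Y1 T d1 n - Af μ Y1 T d1 0)
              - (Gf μ Y1 Y2 T d1 d2 n - Gf μ Y1 Y2 T d1 d2 0)) := by
          rw [← Finset.sum_range_sub (fun k => Af μ Y1 T d1 k) n,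
            ← Finset.sum_range_sub (fun k => Gf μ Y1 Y2 T d1 d2 k) n,
            ← Finset.sum_sub_distrib, ← Finset.sum_add_distrib]
          exact Finset.sum_congr rfl (fun k _ => by ring)
      _ = ∑ k ∈ Finset.range n, (Df μ Y1 Y2 T d1 d2 k - Gf μ Y1 Y2 T d1 d2 k)
            - (Bf μ Y2 T d2 n - Bf μ Y2 T d2 0) := by
          rw [Af_zero, Bf_top, Gf_top, Gf_zero]
          ring
      _ = ∑ k ∈ Finset.range n, (fun k : ℕ => Df μ Y1 Y2 T d1 d2 k + Bf μ Y2 T d2 k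
            - Gf μ Y1 Y2 T d1 d2 k - Bf μ Y2 T d2 (k+1)) k := by
          rw [← Finset.sum_range_sub (fun k => Bf μ Y2 T d2 k) n, ← Finset.sum_sub_distrib]
          exact Finset.sum_congr rfl (fun k _ => by ring)
      _ = ∑ i : Fin n, (fun k : ℕ => Df μ Y1 Y2 T d1 d2 k + Bf μ Y2 T d2 k
            - Gf μ Y1 Y2 T d1 d2 k - Bf μ Y2 T d2 (k+1)) i.1 := by
          exact (Fin.sum_univ_eq_sum_range (fun k : ℕ => Df μ Y1 Y2 T d1 d2 k
            + Bf μ Y2 T d2 k - Gf μ Y1 Y2 T d1 d2 k - Bf μ Y2 T d2 (k+1)) n).symm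
      _ = ∑ i : Fin n,
        condMutInf μ (fun ω => fun j : Fin i.1 => Y1 (Fin.castLE i.isLt.le j) ω) (Y2 i)
          (fun ω => ((fun j : {k : Fin n // i < k} => Y2 j.1 ω), T ω)) :=
          Finset.sum_congr rfl (fun i _ => (rhs_term μ Y1 Y2 T d1 d2 i).symm)
end

section
/- For the dirty-paper auxiliary choice U = X'_1 + α_{10}X'_2 + α_{11}S_1 + α_{12}S_2 with X'_1 ~ N(0, γP'), X'_2 ~ N(0, γ̄P'), S_1 ~ N(0,Q_1), S_2 ~ N(0,Q_2) mutually independent, channel Y_1 = X'_1 + X'_2 + (1+β_1)S_1 + β_2 S_2 + Z_1, Z_1 ~ N(0,N_1) independent, and coefficients α_{10} = γP'/(γP'+N_1), α_{11} = (1+β_1)γP'/(γP'+N_1), α_{12} = β_2γP'/(γP'+N_1), the rate expression satisfies I(U; Y_1) − I(U; X'_2, S_1, S_2) = (1/2)·log(1 + γP'/N_1). -/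
/-!
Write `a = γP'` and collect what `Y₁` sees besides `X'₁` and `Z₁` into one interference term
`B = X'₂ + (1+β₁)S₁ + β₂S₂` of variance `s`. The coefficients `α₁ⱼ` are Costa's
`α = a/(a+N₁)` times the coefficients of `B`, so `U = X'₁ + αB` and `Y₁ = X'₁ + B + Z₁`.
For this `α` the Gram determinant of `(U, Y₁)` factors as `a N₁ Var(Y₁)/(a+N₁)`, so both
`Var U` and `Var Y₁` cancel from the difference of the two mutual informations.
-/

open Real

namespace CostaDirtyPaper

variable {a s N α : ℝ}

theorem gram_det_eq (hα : α = a / (a + N)) (haN : a + N ≠ 0) :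
    (a + α ^ 2 * s) * (a + s + N) - (a + α * s) ^ 2 = a * N * (a + s + N) / (a + N) := by
  subst hα
  field_simp
  ring

theorem log_rate_eq (hα : α = a / (a + N)) (ha : 0 < a) (hs : 0 ≤ s) (hN : 0 < N) :
    log ((a + α ^ 2 * s) * (a + s + N) / ((a + α ^ 2 * s) * (a + s + N) - (a + α * s) ^ 2))
      - log ((a + α ^ 2 * s) / a) = log (1 + a / N) := by
  have hvarY : 0 < a + s + N := by linarith
  rw [gram_det_eq hα (by positivity), ← log_div (by positivity) (by positivity)]
  congr 1
  subst hα
  field_simp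
  ring

end CostaDirtyPaper

/-- dirty-paper rate computation.  With mutually independent zero-mean
Gaussians `X'₁ ~ N(0,γP')`, `X'₂ ~ N(0,(1−γ)P')`, `S₁ ~ N(0,Q₁)`, `S₂ ~ N(0,Q₂)`,
`Z₁ ~ N(0,N₁)`, auxiliary `U = X'₁ + α₁₀X'₂ + α₁₁S₁ + α₁₂S₂`, channel output
`Y₁ = X'₁ + X'₂ + (1+β₁)S₁ + β₂S₂ + Z₁`, and the stated dirty-paper coefficients, the
jointly Gaussian mutual informations (computed from the covariance structure:
`I(U;Y₁) = ½ log(VarU·VarY/(VarU·VarY − Cov(U,Y₁)²))` and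
`I(U;X'₂,S₁,S₂) = ½ log(VarU/Var(U|X'₂,S₁,S₂))` with `Var(U|X'₂,S₁,S₂) = γP'`) satisfy
`I(U;Y₁) − I(U;X'₂,S₁,S₂) = ½ log(1 + γP'/N₁)`. -/
theorem dirty_paper_rate
    (γ P' N1 Q1 Q2 β1 β2 : ℝ)
    (hγ0 : 0 < γ) (hγ1 : γ < 1) (hP' : 0 < P') (hN1 : 0 < N1) (hQ1 : 0 < Q1) (hQ2 : 0 < Q2)
    (α10 α11 α12 : ℝ)
    (hα10 : α10 = γ * P' / (γ * P' + N1))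
    (hα11 : α11 = (1 + β1) * γ * P' / (γ * P' + N1))
    (hα12 : α12 = β2 * γ * P' / (γ * P' + N1))
    (varU varY covUY varUgB IUY IUB : ℝ)
    (hvarU : varU = γ * P' + α10 ^ 2 * (1 - γ) * P' + α11 ^ 2 * Q1 + α12 ^ 2 * Q2)
    (hvarY : varY = γ * P' + (1 - γ) * P' + (1 + β1) ^ 2 * Q1 + β2 ^ 2 * Q2 + N1)
    (hcovUY : covUY = γ * P' + α10 * (1 - γ) * P' + α11 * (1 + β1) * Q1 + α12 * β2 * Q2)
    (hvarUgB : varUgB = γ * P')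
    (hIUY : IUY = (1 / 2) * Real.log (varU * varY / (varU * varY - covUY ^ 2)))
    (hIUB : IUB = (1 / 2) * Real.log (varU / varUgB)) :
    IUY - IUB = (1 / 2) * Real.log (1 + γ * P' / N1) := by
  set s := (1 - γ) * P' + (1 + β1) ^ 2 * Q1 + β2 ^ 2 * Q2
  have hs : 0 ≤ s := add_nonneg (add_nonneg (mul_nonneg (by linarith) hP'.le)
    (mul_nonneg (sq_nonneg _) hQ1.le)) (mul_nonneg (sq_nonneg _) hQ2.le)
  have hvarU' : varU = γ * P' + α10 ^ 2 * s := by rw [hvarU, hα11, hα12, hα10]; ring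
  have hvarY' : varY = γ * P' + s + N1 := by rw [hvarY]; ring
  have hcovUY' : covUY = γ * P' + α10 * s := by rw [hcovUY, hα11, hα12, hα10]; ring
  rw [hIUY, hIUB, hvarUgB, hvarU', hvarY', hcovUY', ← mul_sub,
    CostaDirtyPaper.log_rate_eq hα10 (by positivity) hs hN1]
end

section
/- Counting bound for binned codebook leakage: suppose W^n is a function of (M_0, L_0) where, given M_0, L_0 takes at most 2^{nR̃_0} values, and U^n is a function of (M_0, L_0, M_1, L_{1s}, L_{12}) where given (M_0, M_1, W^n), the pair (L_{1s}, L_{12}) takes at most 2^{n(R̃_{1s}+R̃_{12})} values, and given (M_0, M_1, W^n, S^n), U^n is uniform over 2^{nR̃_{12}} values. If (M_0,M_1) ⫫ S^n, then I(S^n; W^n, U^n) ≤ n(R̃_0 + R̃_{1s}). -/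
open scoped BigOperators
open Real

namespace Masking

variable {Ω : Type} [Fintype Ω]

/-- Shannon entropy in bits. -/
noncomputable def ent2 (μ : FinProb Ω) {α : Type} [Fintype α] [DecidableEq α] (X : Ω → α) : ℝ :=
  -∑ a, pdist μ X a * Real.logb 2 (pdist μ X a)

/-- Conditional entropy `H(X|Y)` in bits. -/
noncomputable def condEnt2 (μ : FinProb Ω) {α β : Type} [Fintype α] [DecidableEq α] [Fintype β]
    [DecidableEq β] (X : Ω → α) (Y : Ω → β) : ℝ :=
  ent2 μ (fun ω => (X ω, Y ω)) - ent2 μ Y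

/-- Mutual information `I(X;Y)` in bits. -/
noncomputable def mutInf2 (μ : FinProb Ω) {α β : Type} [Fintype α] [DecidableEq α] [Fintype β]
    [DecidableEq β] (X : Ω → α) (Y : Ω → β) : ℝ :=
  ent2 μ X + ent2 μ Y - ent2 μ (fun ω => (X ω, Y ω))

end Masking

/-!
Write `M = (M₀,M₁)`. Since `M ⫫ Sⁿ`, submodularity gives
`I(Sⁿ;Wⁿ,Uⁿ) ≤ I(Sⁿ;Wⁿ,Uⁿ | M) = H(Wⁿ,Uⁿ|M) - H(Wⁿ,Uⁿ|M,Sⁿ)`. The codewords are functions of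
`(M, L₀, L_{1s}, L_{12})`, so
`H(Wⁿ,Uⁿ|M) ≤ H(L₀) + H(L_{1s},L_{12}|M,Wⁿ) ≤ n(R̃₀ + R̃_{1s} + R̃_{12})`,
while `H(Wⁿ,Uⁿ|M,Sⁿ) ≥ H(Uⁿ|M,Wⁿ,Sⁿ) = nR̃_{12}`.
-/

namespace Masking

variable {Ω : Type} [Fintype Ω]

theorem FinProb.nonempty (μ : FinProb Ω) : Nonempty Ω := by
  by_contra h
  simpa [not_nonempty_iff.mp h] using μ.sum_eq_one

variable (μ : FinProb Ω)

theorem pdist_nonneg {α : Type} [DecidableEq α] (X : Ω → α) (a : α) : 0 ≤ pdist μ X a :=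
  Finset.sum_nonneg fun ω _ => ite_nonneg (μ.nonneg ω) le_rfl

theorem sum_p_mul_comp {α : Type} [Fintype α] [DecidableEq α] (X : Ω → α) (F : α → ℝ) :
    ∑ ω, μ.p ω * F (X ω) = ∑ a, pdist μ X a * F a := by
  simp only [pdist, Finset.sum_mul, ite_mul, zero_mul]
  rw [Finset.sum_comm]
  simp

theorem sum_pdist {α : Type} [Fintype α] [DecidableEq α] (X : Ω → α) : ∑ a, pdist μ X a = 1 := by
  simpa [μ.sum_eq_one] using (sum_p_mul_comp μ X fun _ => 1).symm

theorem sum_p_mul_congr {f g : Ω → ℝ} (h : ∀ ω, 0 < μ.p ω → f ω = g ω) :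
    ∑ ω, μ.p ω * f ω = ∑ ω, μ.p ω * g ω := by
  refine Finset.sum_congr rfl fun ω _ => ?_
  rcases (μ.nonneg ω).eq_or_lt with h0 | h0
  · simp [← h0]
  · rw [h ω h0]

theorem ent_eq_sum {α : Type} [Fintype α] [DecidableEq α] (X : Ω → α) :
    ent μ X = -∑ ω, μ.p ω * Real.log (pdist μ X (X ω)) := by
  rw [ent, sum_p_mul_comp μ X fun a => Real.log (pdist μ X a)]

theorem pdist_apply_self_pos {α : Type} [DecidableEq α] (X : Ω → α) {ω : Ω} (hω : 0 < μ.p ω) :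
    0 < pdist μ X (X ω) :=
  hω.trans_le <| by
    simpa [pdist] using Finset.single_le_sum (f := fun ω' => if X ω' = X ω then μ.p ω' else 0)
      (fun _ _ => ite_nonneg (μ.nonneg _) le_rfl) (Finset.mem_univ ω)

theorem pdist_le_pdist_of_comp {α β : Type} [DecidableEq α] [DecidableEq β] {X : Ω → α}
    {Y : Ω → β} (φ : α → β) (h : ∀ ω, Y ω = φ (X ω)) (a : α) :
    pdist μ X a ≤ pdist μ Y (φ a) := by
  refine Finset.sum_le_sum fun ω _ => ?_
  by_cases hX : X ω = a
  · simp [hX, h ω]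
  · rw [if_neg hX]
    exact ite_nonneg (μ.nonneg ω) le_rfl

theorem sum_pdist_pair_fst {α β : Type} [Fintype α] [DecidableEq α] [DecidableEq β]
    (X : Ω → α) (Y : Ω → β) (b : β) :
    ∑ a, pdist μ (fun ω => (X ω, Y ω)) (a, b) = pdist μ Y b := by
  simp only [pdist, Prod.mk.injEq]
  rw [Finset.sum_comm]
  refine Finset.sum_congr rfl fun ω _ => ?_
  by_cases hY : Y ω = b <;> simp [hY]

theorem sum_p_mul_log_le {r : Ω → ℝ} (hr : ∀ ω, 0 < μ.p ω → 0 < r ω) :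
    ∑ ω, μ.p ω * Real.log (r ω) ≤ ∑ ω, μ.p ω * r ω - 1 := by
  rw [← μ.sum_eq_one, ← Finset.sum_sub_distrib]
  refine Finset.sum_le_sum fun ω _ => ?_
  rcases (μ.nonneg ω).eq_or_lt with h0 | h0
  · simp [← h0]
  · rw [← mul_sub_one]
    exact mul_le_mul_of_nonneg_left (Real.log_le_sub_one_of_pos (hr ω h0)) h0.le

theorem ent_le_of_comp {α β : Type} [Fintype α] [DecidableEq α] [Fintype β] [DecidableEq β]
    {X : Ω → α} {Y : Ω → β} (φ : α → β) (h : ∀ ω, Y ω = φ (X ω)) :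
    ent μ Y ≤ ent μ X := by
  rw [ent_eq_sum, ent_eq_sum, neg_le_neg_iff]
  refine Finset.sum_le_sum fun ω _ => ?_
  rcases (μ.nonneg ω).eq_or_lt with h0 | h0
  · simp [← h0]
  · refine mul_le_mul_of_nonneg_left (Real.log_le_log (pdist_apply_self_pos μ X h0) ?_) h0.le
    rw [h ω]
    exact pdist_le_pdist_of_comp μ φ h (X ω)

theorem ent_eq_of_comp {α β : Type} [Fintype α] [DecidableEq α] [Fintype β] [DecidableEq β]
    {X : Ω → α} {Y : Ω → β} (φ : α → β) (ψ : β → α) (hY : ∀ ω, Y ω = φ (X ω))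
    (hX : ∀ ω, X ω = ψ (Y ω)) : ent μ Y = ent μ X :=
  (ent_le_of_comp μ φ hY).antisymm (ent_le_of_comp μ ψ hX)

theorem ent_pair_comm {α β : Type} [Fintype α] [DecidableEq α] [Fintype β] [DecidableEq β]
    (X : Ω → α) (Y : Ω → β) : ent μ (fun ω => (Y ω, X ω)) = ent μ (fun ω => (X ω, Y ω)) :=
  ent_eq_of_comp μ Prod.swap Prod.swap (fun _ => rfl) (fun _ => rfl)

theorem ent_le_log_card {α : Type} [Fintype α] [DecidableEq α] (X : Ω → α) :
    ent μ X ≤ Real.log (Fintype.card α) := by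
  set N : ℝ := (Fintype.card α : ℝ)
  obtain ⟨ω₀⟩ := μ.nonempty
  have hN : 0 < N := by simpa [N] using Fintype.card_pos_iff.mpr ⟨X ω₀⟩
  have hgibbs := sum_p_mul_log_le μ (r := fun ω => (N * pdist μ X (X ω))⁻¹)
    fun ω hω => inv_pos.mpr (mul_pos hN (pdist_apply_self_pos μ X hω))
  have hlog : ∑ ω, μ.p ω * Real.log (N * pdist μ X (X ω))⁻¹
      = ∑ ω, μ.p ω * (-Real.log N - Real.log (pdist μ X (X ω))) :=
    sum_p_mul_congr μ fun ω hω => by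
      rw [Real.log_inv, Real.log_mul hN.ne' (pdist_apply_self_pos μ X hω).ne']
      ring
  have hmass : ∑ ω, μ.p ω * (N * pdist μ X (X ω))⁻¹ ≤ 1 := by
    rw [sum_p_mul_comp μ X fun a => (N * pdist μ X a)⁻¹]
    calc ∑ a, pdist μ X a * (N * pdist μ X a)⁻¹ ≤ ∑ _a : α, N⁻¹ := by
          refine Finset.sum_le_sum fun a _ => ?_
          rw [mul_inv, mul_left_comm]
          exact mul_le_of_le_one_right (by positivity) (mul_inv_le_one)
      _ = 1 := by simp [N, hN.ne']
  simp only [mul_sub, mul_neg, Finset.sum_sub_distrib, Finset.sum_neg_distrib,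
    ← Finset.sum_mul, μ.sum_eq_one] at hlog
  rw [ent_eq_sum]
  linarith

theorem ent_le_log_of_card_le {α : Type} [Fintype α] [DecidableEq α] (X : Ω → α) {N : ℝ}
    (hN : (Fintype.card α : ℝ) ≤ N) : ent μ X ≤ Real.log N := by
  obtain ⟨ω⟩ := μ.nonempty
  have hcard : (0 : ℝ) < Fintype.card α := by
    exact_mod_cast Fintype.card_pos_iff.mpr ⟨X ω⟩
  exact (ent_le_log_card μ X).trans (Real.log_le_log hcard hN)

theorem ent_pair_eq_add_of_indep {α β : Type} [Fintype α] [DecidableEq α] [Fintype β]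
    [DecidableEq β] {X : Ω → α} {Y : Ω → β} (h : IndepRV μ X Y) :
    ent μ (fun ω => (X ω, Y ω)) = ent μ X + ent μ Y := by
  simp only [ent_eq_sum]
  rw [sum_p_mul_congr μ (g := fun ω => Real.log (pdist μ X (X ω)) + Real.log (pdist μ Y (Y ω)))
    fun ω hω => by
      rw [h, Real.log_mul (pdist_apply_self_pos μ X hω).ne' (pdist_apply_self_pos μ Y hω).ne']]
  simp only [mul_add, Finset.sum_add_distrib]
  ring

theorem sum_pdist_mul_pdist_div_pdist {α β γ : Type} [Fintype α] [DecidableEq α] [Fintype β]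
    [DecidableEq β] [Fintype γ] [DecidableEq γ] (X : Ω → α) (Y : Ω → β) (Z : Ω → γ) :
    ∑ t : α × β × γ, pdist μ (fun ω => (X ω, Z ω)) (t.1, t.2.2)
      * pdist μ (fun ω => (Y ω, Z ω)) (t.2.1, t.2.2) / pdist μ Z t.2.2 = 1 := by
  calc _ = ∑ c, (∑ a, pdist μ (fun ω => (X ω, Z ω)) (a, c))
          * (∑ b, pdist μ (fun ω => (Y ω, Z ω)) (b, c)) / pdist μ Z c := by
        simp only [Finset.sum_mul_sum, Finset.sum_div, Fintype.sum_prod_type]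
        exact (Finset.sum_congr rfl fun _ _ => Finset.sum_comm).trans Finset.sum_comm
    _ = ∑ c, pdist μ Z c := by simp only [sum_pdist_pair_fst, mul_self_div_self]
    _ = 1 := sum_pdist μ Z

theorem ent_submod {α β γ : Type} [Fintype α] [DecidableEq α] [Fintype β] [DecidableEq β]
    [Fintype γ] [DecidableEq γ] (X : Ω → α) (Y : Ω → β) (Z : Ω → γ) :
    ent μ (fun ω => (X ω, Y ω, Z ω)) + ent μ Z
      ≤ ent μ (fun ω => (X ω, Z ω)) + ent μ (fun ω => (Y ω, Z ω)) := by
  set XYZ := fun ω => (X ω, Y ω, Z ω)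
  set pXZ := pdist μ (fun ω => (X ω, Z ω))
  set pYZ := pdist μ (fun ω => (Y ω, Z ω))
  -- Gibbs against `P(a,c) P(b,c) / P(c)`, the law making `X` and `Y` independent given `Z`
  set F : α × β × γ → ℝ := fun t =>
    pXZ (t.1, t.2.2) * pYZ (t.2.1, t.2.2) / (pdist μ XYZ t * pdist μ Z t.2.2)
  have hpos : ∀ ω, 0 < μ.p ω → 0 < pXZ (X ω, Z ω) * pYZ (Y ω, Z ω) ∧
      0 < pdist μ XYZ (XYZ ω) * pdist μ Z (Z ω) := fun ω hω =>
    ⟨mul_pos (pdist_apply_self_pos μ _ hω) (pdist_apply_self_pos μ _ hω),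
      mul_pos (pdist_apply_self_pos μ _ hω) (pdist_apply_self_pos μ _ hω)⟩
  have hgibbs := sum_p_mul_log_le μ (r := fun ω => F (XYZ ω)) fun ω hω =>
    div_pos (hpos ω hω).1 (hpos ω hω).2
  have hlog : ∑ ω, μ.p ω * Real.log (F (XYZ ω)) = ∑ ω, μ.p ω * (Real.log (pXZ (X ω, Z ω))
      + Real.log (pYZ (Y ω, Z ω)) - Real.log (pdist μ XYZ (XYZ ω)) - Real.log (pdist μ Z (Z ω))) :=
    sum_p_mul_congr μ fun ω hω => by
      obtain ⟨hnum, hden⟩ := hpos ω hω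
      rw [Real.log_div hnum.ne' hden.ne', Real.log_mul (left_ne_zero_of_mul hnum.ne')
          (right_ne_zero_of_mul hnum.ne'), Real.log_mul (left_ne_zero_of_mul hden.ne')
          (right_ne_zero_of_mul hden.ne')]
      ring
  have hmass : ∑ ω, μ.p ω * F (XYZ ω) ≤ 1 := by
    rw [sum_p_mul_comp μ XYZ F, ← sum_pdist_mul_pdist_div_pdist μ X Y Z]
    refine Finset.sum_le_sum fun t _ => ?_
    rcases (pdist_nonneg μ XYZ t).eq_or_lt with h0 | h0
    · rw [← h0, zero_mul]
      exact div_nonneg (mul_nonneg (pdist_nonneg μ _ _) (pdist_nonneg μ _ _)) (pdist_nonneg μ _ _)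
    · rw [← mul_div_assoc, mul_div_mul_left _ _ h0.ne']
  simp only [mul_add, mul_sub, Finset.sum_add_distrib, Finset.sum_sub_distrib] at hlog
  simp only [ent_eq_sum]
  linarith

theorem ent_pair_le_add {α β : Type} [Fintype α] [DecidableEq α] [Fintype β] [DecidableEq β]
    (X : Ω → α) (Y : Ω → β) : ent μ (fun ω => (X ω, Y ω)) ≤ ent μ X + ent μ Y := by
  have h := ent_submod μ X Y fun _ => ()
  have hXY : ent μ (fun ω => (X ω, Y ω, ())) = ent μ (fun ω => (X ω, Y ω)) :=
    ent_eq_of_comp μ (fun p => (p.1, p.2, ())) (fun p => (p.1, p.2.1)) (fun _ => rfl) fun _ => rfl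
  have hX : ent μ (fun ω => (X ω, ())) = ent μ X :=
    ent_eq_of_comp μ (fun a => (a, ())) Prod.fst (fun _ => rfl) fun _ => rfl
  have hY : ent μ (fun ω => (Y ω, ())) = ent μ Y :=
    ent_eq_of_comp μ (fun a => (a, ())) Prod.fst (fun _ => rfl) fun _ => rfl
  have hunit : ent μ (fun _ => ()) = 0 := by simp [ent, pdist, μ.sum_eq_one]
  linarith

theorem condEnt_congr_right {α γ δ : Type} [Fintype α] [DecidableEq α] [Fintype γ]
    [DecidableEq γ] [Fintype δ] [DecidableEq δ] (X : Ω → α) {Z : Ω → γ} {Z' : Ω → δ}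
    (φ : γ → δ) (ψ : δ → γ) (hZ' : ∀ ω, Z' ω = φ (Z ω)) (hZ : ∀ ω, Z ω = ψ (Z' ω)) :
    condEnt μ X Z' = condEnt μ X Z := by
  have hpair : ent μ (fun ω => (X ω, Z' ω)) = ent μ (fun ω => (X ω, Z ω)) :=
    ent_eq_of_comp μ (Prod.map id φ) (Prod.map id ψ) (fun ω => by simp [hZ' ω])
      fun ω => by simp [hZ ω]
  rw [condEnt, condEnt, hpair, ent_eq_of_comp μ φ ψ hZ' hZ]

theorem condMutInf_eq_condEnt_sub_condEnt {α β γ : Type} [Fintype α] [DecidableEq α]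
    [Fintype β] [DecidableEq β] [Fintype γ] [DecidableEq γ] (X : Ω → α) (Y : Ω → β)
    (Z : Ω → γ) :
    condMutInf μ X Y Z = condEnt μ Y Z - condEnt μ Y (fun ω => (Z ω, X ω)) := by
  have h : ent μ (fun ω => (Y ω, Z ω, X ω)) = ent μ (fun ω => ((X ω, Y ω), Z ω)) :=
    ent_eq_of_comp μ (fun t => (t.1.2, t.2, t.1.1)) (fun t => ((t.2.2, t.1), t.2.1))
      (fun _ => rfl) fun _ => rfl
  simp only [condMutInf, condEnt, h, ent_pair_comm μ X Z]
  ring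

theorem mutInf_le_condMutInf_of_indep {α β γ : Type} [Fintype α] [DecidableEq α] [Fintype β]
    [DecidableEq β] [Fintype γ] [DecidableEq γ] (X : Ω → α) (Y : Ω → β) {Z : Ω → γ}
    (h : IndepRV μ Z X) : mutInf μ X Y ≤ condMutInf μ X Y Z := by
  have hsub := ent_submod μ X Z Y
  have hXZY : ent μ (fun ω => (X ω, Z ω, Y ω)) = ent μ (fun ω => ((X ω, Y ω), Z ω)) :=
    ent_eq_of_comp μ (fun t => (t.1.1, t.2, t.1.2)) (fun t => ((t.1, t.2.2), t.2.1))
      (fun _ => rfl) fun _ => rfl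
  have hZX := ent_pair_eq_add_of_indep μ h
  rw [ent_pair_comm μ X Z] at hZX
  rw [ent_pair_comm μ Y Z] at hsub
  simp only [mutInf, condMutInf, condEnt]
  linarith

theorem condEnt_le_condEnt_pair {β γ δ : Type} [Fintype β] [DecidableEq β] [Fintype γ]
    [DecidableEq γ] [Fintype δ] [DecidableEq δ] (Z : Ω → γ) (W : Ω → δ) (U : Ω → β) :
    condEnt μ U (fun ω => (Z ω, W ω)) ≤ condEnt μ (fun ω => (W ω, U ω)) Z := by
  have h : ent μ (fun ω => (U ω, Z ω, W ω)) = ent μ (fun ω => ((W ω, U ω), Z ω)) :=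
    ent_eq_of_comp μ (fun t => (t.1.2, t.2, t.1.1)) (fun t => ((t.2.2, t.1), t.2.1))
      (fun _ => rfl) fun _ => rfl
  have hZ : ent μ Z ≤ ent μ (fun ω => (Z ω, W ω)) := ent_le_of_comp μ Prod.fst fun _ => rfl
  rw [condEnt, condEnt, h]
  linarith

theorem condEnt_superposition_le {ℳ Λ₀ Λ 𝒲 𝒰 : Type} [Fintype ℳ] [DecidableEq ℳ] [Fintype Λ₀]
    [DecidableEq Λ₀] [Fintype Λ] [DecidableEq Λ] [Fintype 𝒲] [DecidableEq 𝒲] [Fintype 𝒰]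
    [DecidableEq 𝒰] (M : Ω → ℳ) (L₀ : Ω → Λ₀) (L : Ω → Λ) {W : Ω → 𝒲} {U : Ω → 𝒰}
    (f : ℳ → Λ₀ → 𝒲) (g : ℳ → Λ₀ → Λ → 𝒰) (hW : ∀ ω, W ω = f (M ω) (L₀ ω))
    (hU : ∀ ω, U ω = g (M ω) (L₀ ω) (L ω)) :
    condEnt μ (fun ω => (W ω, U ω)) M ≤ ent μ L₀ + condEnt μ L (fun ω => (M ω, W ω)) := by
  have hcode : ent μ (fun ω => ((W ω, U ω), M ω)) ≤ ent μ (fun ω => (L ω, L₀ ω, M ω, W ω)) :=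
    ent_le_of_comp μ (fun t => ((t.2.2.2, g t.2.2.1 t.2.1 t.1), t.2.2.1))
      fun ω => by rw [hU ω]
  have hsub := ent_submod μ L L₀ fun ω => (M ω, W ω)
  have hL₀ : ent μ (fun ω => (L₀ ω, M ω, W ω)) = ent μ (fun ω => (L₀ ω, M ω)) :=
    ent_eq_of_comp μ (fun t => (t.1, t.2, f t.2 t.1)) (fun t => (t.1, t.2.1))
      (fun ω => by rw [hW ω]) fun _ => rfl
  have hadd := ent_pair_le_add μ L₀ M
  rw [condEnt, condEnt]
  linarith

theorem ent2_eq_div {α : Type} [Fintype α] [DecidableEq α] (X : Ω → α) :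
    ent2 μ X = ent μ X / Real.log 2 := by
  simp only [ent2, ent, Real.logb, neg_div, Finset.sum_div, mul_div_assoc]

theorem condEnt2_eq_div {α β : Type} [Fintype α] [DecidableEq α] [Fintype β] [DecidableEq β]
    (X : Ω → α) (Y : Ω → β) : condEnt2 μ X Y = condEnt μ X Y / Real.log 2 := by
  rw [condEnt2, condEnt, ent2_eq_div, ent2_eq_div, sub_div]

theorem mutInf2_eq_div {α β : Type} [Fintype α] [DecidableEq α] [Fintype β] [DecidableEq β]
    (X : Ω → α) (Y : Ω → β) : mutInf2 μ X Y = mutInf μ X Y / Real.log 2 := by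
  rw [mutInf2, mutInf, ent2_eq_div, ent2_eq_div, ent2_eq_div]
  ring

end Masking

open Masking in
/-- counting bound for binned codebook leakage (entropies in bits):
`Wⁿ` is a function of `(M₀,L₀)` where `L₀` ranges over at most `2^{nR̃₀}` values,
`Uⁿ` is a function of `(M₀,L₀,M₁,L_{1s},L_{12})` where given `(M₀,M₁,Wⁿ)` the pair
`(L_{1s},L_{12})` takes at most `2^{n(R̃_{1s}+R̃_{12})}` values (expressed as a
conditional-entropy bound), and given `(M₀,M₁,Wⁿ,Sⁿ)` the codeword `Uⁿ` is uniform over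
`2^{nR̃_{12}}` values (expressed as the exact conditional entropy).  If `(M₀,M₁) ⫫ Sⁿ`
then `I(Sⁿ;Wⁿ,Uⁿ) ≤ n(R̃₀ + R̃_{1s})`. -/
theorem binned_codebook_leakage_bound
    {Ω ℳ₀ ℳ₁ Λ1s Λ12 𝒮 𝒲 𝒰 : Type} [Fintype Ω]
    [Fintype ℳ₀] [DecidableEq ℳ₀] [Fintype ℳ₁] [DecidableEq ℳ₁]
    [Fintype Λ1s] [DecidableEq Λ1s] [Fintype Λ12] [DecidableEq Λ12]
    [Fintype 𝒮] [DecidableEq 𝒮] [Fintype 𝒲] [DecidableEq 𝒲] [Fintype 𝒰] [DecidableEq 𝒰]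
    (μ : FinProb Ω) (n : ℕ) (R0t R1s R12 : ℝ) {K0 : ℕ}
    (M0 : Ω → ℳ₀) (M1 : Ω → ℳ₁) (L0 : Ω → Fin K0) (L1s : Ω → Λ1s) (L12 : Ω → Λ12)
    (S : Ω → 𝒮) (W : Ω → 𝒲) (U : Ω → 𝒰)
    (hK0 : (K0 : ℝ) ≤ (2 : ℝ) ^ ((n : ℝ) * R0t))
    (f : ℳ₀ → Fin K0 → 𝒲) (hW : ∀ ω, W ω = f (M0 ω) (L0 ω))
    (g : ℳ₀ → Fin K0 → ℳ₁ → Λ1s → Λ12 → 𝒰)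
    (hU : ∀ ω, U ω = g (M0 ω) (L0 ω) (M1 ω) (L1s ω) (L12 ω))
    (hbin : condEnt2 μ (fun ω => (L1s ω, L12 ω)) (fun ω => (M0 ω, M1 ω, W ω))
      ≤ (n : ℝ) * (R1s + R12))
    (hunif : condEnt2 μ U (fun ω => (M0 ω, M1 ω, W ω, S ω)) = (n : ℝ) * R12)
    (hind : IndepRV μ (fun ω => (M0 ω, M1 ω)) S) :
    mutInf2 μ S (fun ω => (W ω, U ω)) ≤ (n : ℝ) * (R0t + R1s) := by
  have hlog2 : 0 < Real.log 2 := Real.log_pos one_lt_two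
  set M : Ω → ℳ₀ × ℳ₁ := fun ω => (M0 ω, M1 ω)
  have hL0 : ent μ L0 ≤ n * R0t * Real.log 2 := by
    rw [← Real.log_rpow two_pos]
    exact ent_le_log_of_card_le μ L0 (by simpa using hK0)
  rw [condEnt2_eq_div, div_le_iff₀ hlog2] at hbin
  rw [condEnt2_eq_div, div_eq_iff hlog2.ne'] at hunif
  have hbin' : condEnt μ (fun ω => (L1s ω, L12 ω)) (fun ω => (M ω, W ω))
      ≤ n * (R1s + R12) * Real.log 2 :=
    (condEnt_congr_right μ _ (Z := fun ω => (M0 ω, M1 ω, W ω))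
      (fun z => ((z.1, z.2.1), z.2.2)) (fun z => (z.1.1, z.1.2, z.2))
      (fun _ => rfl) fun _ => rfl).trans_le hbin
  have hunif' : condEnt μ U (fun ω => ((M ω, S ω), W ω)) = n * R12 * Real.log 2 :=
    (condEnt_congr_right μ U (Z := fun ω => (M0 ω, M1 ω, W ω, S ω))
      (fun z => (((z.1, z.2.1), z.2.2.2), z.2.2.1))
      (fun z => (z.1.1.1, z.1.1.2, z.2, z.1.2)) (fun _ => rfl) fun _ => rfl).trans hunif
  have hleak := mutInf_le_condMutInf_of_indep μ S (fun ω => (W ω, U ω)) hind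
  rw [condMutInf_eq_condEnt_sub_condEnt] at hleak
  have hupper := condEnt_superposition_le μ M L0 (fun ω => (L1s ω, L12 ω))
    (fun m l₀ => f m.1 l₀) (fun m l₀ l => g m.1 l₀ m.2 l.1 l.2) hW hU
  have hlower := condEnt_le_condEnt_pair μ (fun ω => (M ω, S ω)) W U
  rw [mutInf2_eq_div, div_le_iff₀ hlog2]
  linarith
end
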